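/- For L ≥ 3, on H_L = ⨂_{j=1}^{L} ℂ², let N_nn = Σ_{j=1}^{L−1} σᶻ_j σᶻ_{j+1} + Σ_{j=1}^{L−2} σᶻ_j σᶻ_{j+2} (the case J = J₂ of nearest- plus next-nearest-neighbour Ising couplings). Then the nonzero operator O = σˣ_1 (σᶻ_2 − σᶻ_3) commutes with N_nn and anticommutes with σᶻ_1. Hence there is a nonzero edge-spin-flip operator commuting with N_nn, so conservation of N_nn does not forbid flipping the edge spin. -/

import Mathlib

/-! Sites are 0-based: the paper's site `j` is index `j − 1`, and comments use the paper's labels. -/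

noncomputable section

open Matrix Complex

/-- Pauli X matrix. -/
def sigmaX : Matrix (Fin 2) (Fin 2) ℂ := !![0, 1; 1, 0]

/-- Pauli Y matrix. -/
def sigmaY : Matrix (Fin 2) (Fin 2) ℂ := !![0, -Complex.I; Complex.I, 0]

/-- Pauli Z matrix. -/
def sigmaZ : Matrix (Fin 2) (Fin 2) ℂ := !![1, 0; 0, -1]

/-- The operator on ⨂_{k=0}^{L-1} ℂ² acting as the 2×2 matrix `A` on the j-th tensor
factor and as the identity on all the others (matrix entries of a tensor product). -/
def siteOp (L : ℕ) (j : ℕ) (A : Matrix (Fin 2) (Fin 2) ℂ) :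
    Matrix (Fin L → Fin 2) (Fin L → Fin 2) ℂ :=
  fun s t => ∏ k : Fin L, if (k : ℕ) = j then A (s k) (t k) else (if s k = t k then 1 else 0)

/-- σˣ_j -/
def PX (L j : ℕ) : Matrix (Fin L → Fin 2) (Fin L → Fin 2) ℂ := siteOp L j sigmaX
/-- σʸ_j -/
def PY (L j : ℕ) : Matrix (Fin L → Fin 2) (Fin L → Fin 2) ℂ := siteOp L j sigmaY
/-- σᶻ_j -/
def PZ (L j : ℕ) : Matrix (Fin L → Fin 2) (Fin L → Fin 2) ℂ := siteOp L j sigmaZ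

/-- The Jordan–Wigner string Π_{k<j} σˣ_k. -/
def jwString (L j : ℕ) : Matrix (Fin L → Fin 2) (Fin L → Fin 2) ℂ :=
  ((List.range j).map (PX L)).prod

/-- Majorana operator γ_j^A = (Π_{k<j} σˣ_k) σᶻ_j (0-based site index). -/
def gammaA (L j : ℕ) : Matrix (Fin L → Fin 2) (Fin L → Fin 2) ℂ := jwString L j * PZ L j

/-- Majorana operator γ_j^B = (Π_{k<j} σˣ_k) σʸ_j (0-based site index). -/
def gammaB (L j : ℕ) : Matrix (Fin L → Fin 2) (Fin L → Fin 2) ℂ := jwString L j * PY L j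

/-!
Every `σᶻ_j` with `j ≥ 2` commutes with `σˣ₁`, so `O` commutes with every bond not touching
site 1. The two bonds at site 1 add up to `σᶻ₁ (σᶻ₂ + σᶻ₃)`, which `O` annihilates from both
sides because `(σᶻ₂ − σᶻ₃)(σᶻ₂ + σᶻ₃) = (σᶻ₂)² − (σᶻ₃)² = 0`. Anticommutation with `σᶻ₁` is that of
`σˣ` with `σᶻ` on site 1, and `O ≠ 0` is read off a diagonal entry of `σˣ₁ O = σᶻ₂ − σᶻ₃`.
-/

/-- The operator `⨂ₖ M k` on `(ℂ²)^{⊗ L}`. -/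
def tensorOp (L : ℕ) (M : ℕ → Matrix (Fin 2) (Fin 2) ℂ) :
    Matrix (Fin L → Fin 2) (Fin L → Fin 2) ℂ :=
  fun s t => ∏ k : Fin L, M k (s k) (t k)

section SiteOperators

variable (L : ℕ)

lemma tensorOp_mul (M N : ℕ → Matrix (Fin 2) (Fin 2) ℂ) :
    tensorOp L M * tensorOp L N = tensorOp L (fun k => M k * N k) := by
  ext s t
  simp only [tensorOp, Matrix.mul_apply, ← Finset.prod_mul_distrib, Fintype.prod_sum]

lemma siteOp_eq_tensorOp (j : ℕ) (A : Matrix (Fin 2) (Fin 2) ℂ) :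
    siteOp L j A = tensorOp L (fun k => if k = j then A else 1) := by
  ext s t
  refine Finset.prod_congr rfl fun k _ => ?_
  by_cases h : (k : ℕ) = j <;> simp [h, Matrix.one_apply]

lemma siteOp_mul_siteOp (j : ℕ) (A B : Matrix (Fin 2) (Fin 2) ℂ) :
    siteOp L j A * siteOp L j B = siteOp L j (A * B) := by
  simp only [siteOp_eq_tensorOp, tensorOp_mul]
  congr 1
  ext1 k
  split_ifs <;> simp

lemma siteOp_commute {j k : ℕ} (h : j ≠ k) (A B : Matrix (Fin 2) (Fin 2) ℂ) :
    Commute (siteOp L j A) (siteOp L k B) := by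
  simp only [Commute, SemiconjBy, siteOp_eq_tensorOp, tensorOp_mul]
  congr 1
  ext1 m
  by_cases hj : m = j <;> by_cases hk : m = k
  · exact absurd (hj.symm.trans hk) h
  all_goals simp [hj, hk, h, h.symm]

lemma siteOp_one (j : ℕ) : siteOp L j 1 = 1 := by
  rw [siteOp_eq_tensorOp]
  ext s t
  simp only [tensorOp, ite_self, Matrix.one_apply, Finset.prod_boole, funext_iff]
  simp

lemma siteOp_apply_self {j : ℕ} (hj : j < L) (A : Matrix (Fin 2) (Fin 2) ℂ)
    (s : Fin L → Fin 2) : siteOp L j A s s = A (s ⟨j, hj⟩) (s ⟨j, hj⟩) := by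
  rw [siteOp, Finset.prod_eq_single ⟨j, hj⟩ (fun k _ hk => ?_) (by simp)]
  · simp
  · simp [Fin.ext_iff.not.mp hk]

lemma siteOp_neg {j : ℕ} (hj : j < L) (A : Matrix (Fin 2) (Fin 2) ℂ) :
    siteOp L j (-A) = -siteOp L j A := by
  ext s t
  have factor : ∀ k : Fin L,
      (if (k : ℕ) = j then (-A) (s k) (t k) else if s k = t k then 1 else 0)
        = (if k = (⟨j, hj⟩ : Fin L) then (-1 : ℂ) else 1)
          * (if (k : ℕ) = j then A (s k) (t k) else if s k = t k then 1 else 0) := by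
    intro k
    by_cases h : (k : ℕ) = j <;> simp [h, Fin.ext_iff]
  rw [siteOp, Finset.prod_congr rfl fun k _ => factor k, Finset.prod_mul_distrib,
    Finset.prod_ite_eq']
  simp [siteOp]

end SiteOperators

lemma sigmaX_mul_sigmaX : sigmaX * sigmaX = 1 := by
  ext i j; fin_cases i <;> fin_cases j <;> simp [sigmaX, Matrix.mul_apply]

lemma sigmaZ_mul_sigmaZ : sigmaZ * sigmaZ = 1 := by
  ext i j; fin_cases i <;> fin_cases j <;> simp [sigmaZ, Matrix.mul_apply]

lemma sigmaX_mul_sigmaZ : sigmaX * sigmaZ = -(sigmaZ * sigmaX) := by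
  ext i j; fin_cases i <;> fin_cases j <;> simp [sigmaX, sigmaZ, Matrix.mul_apply]

section Pauli

variable (L : ℕ)

lemma PZ_commute (a b : ℕ) : Commute (PZ L a) (PZ L b) := by
  rcases eq_or_ne a b with rfl | h
  · exact Commute.refl _
  · exact siteOp_commute L h _ _

lemma PX_commute_PZ {a b : ℕ} (h : a ≠ b) : Commute (PX L a) (PZ L b) :=
  siteOp_commute L h _ _

lemma PX_mul_self (j : ℕ) : PX L j * PX L j = 1 := by
  rw [PX, siteOp_mul_siteOp, sigmaX_mul_sigmaX, siteOp_one]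

lemma PZ_mul_self (j : ℕ) : PZ L j * PZ L j = 1 := by
  rw [PZ, siteOp_mul_siteOp, sigmaZ_mul_sigmaZ, siteOp_one]

lemma PX_mul_PZ_self {j : ℕ} (hj : j < L) : PX L j * PZ L j = -(PZ L j * PX L j) := by
  rw [PX, PZ, siteOp_mul_siteOp, siteOp_mul_siteOp, sigmaX_mul_sigmaZ, siteOp_neg L hj]

lemma PZ_apply_self {j : ℕ} (hj : j < L) (s : Fin L → Fin 2) :
    PZ L j s s = if s ⟨j, hj⟩ = 0 then 1 else -1 := by
  rw [PZ, siteOp_apply_self L hj]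
  generalize s ⟨j, hj⟩ = b
  fin_cases b <;> simp [sigmaZ]

lemma PZ_sub_mul_PZ_add (a b : ℕ) : (PZ L a - PZ L b) * (PZ L a + PZ L b) = 0 := by
  rw [← (PZ_commute L a b).mul_self_sub_mul_self_eq', PZ_mul_self, PZ_mul_self, sub_self]

lemma PZ_add_mul_PZ_sub (a b : ℕ) : (PZ L a + PZ L b) * (PZ L a - PZ L b) = 0 := by
  rw [← (PZ_commute L a b).mul_self_sub_mul_self_eq, PZ_mul_self, PZ_mul_self, sub_self]

end Pauli

/-- The edge-spin flip `O = σˣ₁ (σᶻ₂ − σᶻ₃)`. -/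
def edgeFlip (L : ℕ) : Matrix (Fin L → Fin 2) (Fin L → Fin 2) ℂ :=
  PX L 0 * (PZ L 1 - PZ L 2)

section EdgeFlip

variable {L : ℕ}

lemma PX_zero_mul_edgeFlip : PX L 0 * edgeFlip L = PZ L 1 - PZ L 2 := by
  rw [edgeFlip, ← mul_assoc, PX_mul_self, one_mul]

lemma edgeFlip_ne_zero (hL : 3 ≤ L) : edgeFlip L ≠ 0 := by
  intro h
  let s : Fin L → Fin 2 := fun k => if (k : ℕ) = 1 then 1 else 0
  have hdiag : (PZ L 1 - PZ L 2) s s = -2 := by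
    rw [Matrix.sub_apply, PZ_apply_self L (by omega), PZ_apply_self L (by omega)]
    norm_num [s]
  rw [← PX_zero_mul_edgeFlip, h, mul_zero, Matrix.zero_apply] at hdiag
  norm_num at hdiag

lemma edgeFlip_mul_PZ_zero (hL : 0 < L) : edgeFlip L * PZ L 0 = -(PZ L 0 * edgeFlip L) := by
  have hZ0 : Commute (PZ L 1 - PZ L 2) (PZ L 0) := (PZ_commute L 1 0).sub_left (PZ_commute L 2 0)
  rw [edgeFlip, mul_assoc, hZ0.eq, ← mul_assoc, PX_mul_PZ_self L hL, neg_mul, mul_assoc]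

lemma edgeFlip_commute_PZ {a : ℕ} (ha : a ≠ 0) : Commute (edgeFlip L) (PZ L a) :=
  (PX_commute_PZ L ha.symm).mul_left ((PZ_commute L 1 a).sub_left (PZ_commute L 2 a))

lemma edgeFlip_commute_edgeBonds :
    Commute (edgeFlip L) (PZ L 0 * PZ L 1 + PZ L 0 * PZ L 2) := by
  have hZ0 : Commute (PZ L 1 - PZ L 2) (PZ L 0) := (PZ_commute L 1 0).sub_left (PZ_commute L 2 0)
  have hX0 : Commute (PZ L 1 + PZ L 2) (PX L 0) :=
    (PX_commute_PZ L one_ne_zero.symm).symm.add_left (PX_commute_PZ L two_ne_zero.symm).symm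
  have hleft : edgeFlip L * (PZ L 0 * (PZ L 1 + PZ L 2)) = 0 := by
    rw [edgeFlip, mul_assoc, ← mul_assoc _ (PZ L 0), hZ0.eq, mul_assoc (PZ L 0),
      PZ_sub_mul_PZ_add, mul_zero, mul_zero]
  have hright : PZ L 0 * (PZ L 1 + PZ L 2) * edgeFlip L = 0 := by
    rw [edgeFlip, mul_assoc, ← mul_assoc _ (PX L 0), hX0.eq, mul_assoc (PX L 0),
      PZ_add_mul_PZ_sub, mul_zero, mul_zero]
  rw [← mul_add]
  exact hleft.trans hright.symm

lemma edgeFlip_commute_bulkBonds (n d : ℕ) :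
    Commute (edgeFlip L) (∑ j ∈ Finset.range n, PZ L (j + 1) * PZ L (j + 1 + d)) :=
  Commute.sum_right _ _ _ fun _ _ =>
    (edgeFlip_commute_PZ (by omega)).mul_right (edgeFlip_commute_PZ (by omega))

end EdgeFlip

theorem statement_17 (L : ℕ) (hL : 3 ≤ L)
    (Nnn O : Matrix (Fin L → Fin 2) (Fin L → Fin 2) ℂ)
    (hNnn : Nnn = (∑ j ∈ Finset.range (L - 1), PZ L j * PZ L (j + 1))
                + (∑ j ∈ Finset.range (L - 2), PZ L j * PZ L (j + 2)))
    (hO : O = PX L 0 * (PZ L 1 - PZ L 2)) :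
    O ≠ 0 ∧ Commute O Nnn ∧ O * PZ L 0 = -(PZ L 0 * O) := by
  subst hO hNnn
  obtain ⟨m, rfl⟩ : ∃ m, L = m + 3 := ⟨L - 3, by omega⟩
  refine ⟨edgeFlip_ne_zero hL, ?_, edgeFlip_mul_PZ_zero (by omega)⟩
  rw [show m + 3 - 1 = m + 1 + 1 by omega, show m + 3 - 2 = m + 1 by omega,
    Finset.sum_range_succ' (fun j => PZ _ j * PZ _ (j + 1)),
    Finset.sum_range_succ' (fun j => PZ _ j * PZ _ (j + 2)), add_add_add_comm]
  exact ((edgeFlip_commute_bulkBonds _ 1).add_right (edgeFlip_commute_bulkBonds _ 2)).add_right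
    edgeFlip_commute_edgeBonds

end
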